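/- Let X be a finite metric space partitioned into m ≥ 1 pairwise disjoint groups X_1,…,X_m, let k_1,…,k_m ≥ 1 with |X_i| ≥ k_i for all i and k = k_1+⋯+k_m ≥ 2, and let ε ∈ (0,1). Suppose that for every μ in the grid U there are: a greedy candidate S_μ on Y = X with threshold μ and capacity k, and for each i ∈ {1,…,m} a greedy candidate S_{μ,i} on Y = X_i with threshold μ and capacity k. Then there exists a fair set S contained in ⋃_{μ∈U} (S_μ ∪ S_{μ,1} ∪ ⋯ ∪ S_{μ,m}) with div(S) ≥ ((1−ε)/(3m+2)) · OPT_f. (Theorem 4: the (1−ε)/(3m+2) approximation guarantee of SFDM2 for fair max–min diversity maximization with an arbitrary number m of groups.) -/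
import Mathlib


open Finset

variable {α : Type*} [MetricSpace α] [DecidableEq α]

/-- A finite set `S` is `μ`-separated if `d(x,y) ≥ μ` for all distinct `x, y ∈ S`. -/
def Separated (μ : ℝ) (S : Finset α) : Prop :=
  ∀ x ∈ S, ∀ y ∈ S, x ≠ y → μ ≤ dist x y

/-- Max–min diversity of a finite set: the minimum pairwise distance over distinct pairs. -/
noncomputable def divers (S : Finset α) : ℝ :=
  sInf {r : ℝ | ∃ x ∈ S, ∃ y ∈ S, x ≠ y ∧ dist x y = r}

/-- Distance from a point to a (nonempty) finite set: `d(y,S) = min_{s ∈ S} d(y,s)`. -/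
noncomputable def setDist (y : α) (S : Finset α) : ℝ :=
  sInf {r : ℝ | ∃ s ∈ S, dist y s = r}

/-- Minimum pairwise distance over distinct pairs of `X`. -/
noncomputable def dMin (X : Finset α) : ℝ :=
  sInf {r : ℝ | ∃ x ∈ X, ∃ y ∈ X, x ≠ y ∧ dist x y = r}

/-- Maximum pairwise distance over distinct pairs of `X`. -/
noncomputable def dMax (X : Finset α) : ℝ :=
  sSup {r : ℝ | ∃ x ∈ X, ∃ y ∈ X, x ≠ y ∧ dist x y = r}

/-- The geometric grid of guesses `U = { d_min/(1-ε)^j : j ∈ ℕ } ∩ [d_min, d_max]`. -/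
def grid (X : Finset α) (ε : ℝ) : Set ℝ :=
  {μ | (∃ j : ℕ, μ = dMin X / (1 - ε) ^ j) ∧ dMin X ≤ μ ∧ μ ≤ dMax X}

/-- A greedy candidate on ground set `Y` with threshold `μ` and capacity `c`:
`S ⊆ Y`, `S` is `μ`-separated, `|S| ≤ c`, and if `|S| < c` then every `y ∈ Y`
satisfies `d(y,S) < μ` (i.e., has some element of `S` within distance `< μ`). -/
def GreedyCandidate (μ : ℝ) (c : ℕ) (Y S : Finset α) : Prop :=
  S ⊆ Y ∧ Separated μ S ∧ S.card ≤ c ∧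
    (S.card < c → ∀ y ∈ Y, ∃ s ∈ S, dist y s < μ)

/-- `OPT`: the maximum of `div(T)` over all `k`-element subsets `T ⊆ X`. -/
noncomputable def OPTk (X : Finset α) (k : ℕ) : ℝ :=
  sSup {r : ℝ | ∃ T ⊆ X, T.card = k ∧ divers T = r}

/-- `OPT_f`: the maximum of `div(S)` over all fair subsets `S ⊆ X`
(those with `|S ∩ X_i| = k_i` for every group `i`). -/
noncomputable def OPTf (X : Finset α) {m : ℕ} (Xg : Fin m → Finset α) (kg : Fin m → ℕ) : ℝ :=
  sSup {r : ℝ | ∃ S ⊆ X, (∀ i, (S ∩ Xg i).card = kg i) ∧ divers S = r}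

/-- The chain relation on `P` with threshold `τ`: the reflexive–transitive closure of
"both points are in `P` and their distance is `< τ`". -/
def ChainRel (P : Finset α) (τ : ℝ) : α → α → Prop :=
  Relation.ReflTransGen (fun x y => x ∈ P ∧ y ∈ P ∧ dist x y < τ)

section Aux

set_option linter.unusedSectionVars false

lemma pairFinite (X : Finset α) :
    {r : ℝ | ∃ x ∈ X, ∃ y ∈ X, x ≠ y ∧ dist x y = r}.Finite := by
  apply Set.Finite.subset ((X ×ˢ X).image (fun p => dist p.1 p.2)).finite_toSet
  rintro r ⟨x, hx, y, hy, -, rfl⟩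
  simp only [coe_image, Set.mem_image, mem_coe, mem_product]
  exact ⟨(x, y), ⟨hx, hy⟩, rfl⟩

lemma divers_le_dist {S : Finset α} {x y : α} (hx : x ∈ S) (hy : y ∈ S) (hxy : x ≠ y) :
    divers S ≤ dist x y :=
  csInf_le (pairFinite S).bddBelow ⟨x, hx, y, hy, hxy, rfl⟩

lemma le_divers {S : Finset α} {c : ℝ} (hS : 1 < S.card)
    (h : ∀ x ∈ S, ∀ y ∈ S, x ≠ y → c ≤ dist x y) : c ≤ divers S := by
  obtain ⟨x, hx, y, hy, hxy⟩ := Finset.one_lt_card.mp hS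
  refine le_csInf ⟨dist x y, x, hx, y, hy, hxy, rfl⟩ ?_
  rintro r ⟨a, ha, b, hb, hab, rfl⟩; exact h a ha b hb hab

lemma divers_mem {S : Finset α} (hS : 1 < S.card) :
    ∃ x ∈ S, ∃ y ∈ S, x ≠ y ∧ dist x y = divers S := by
  obtain ⟨x, hx, y, hy, hxy⟩ := Finset.one_lt_card.mp hS
  have := Set.Nonempty.csInf_mem (s := {r : ℝ | ∃ x ∈ S, ∃ y ∈ S, x ≠ y ∧ dist x y = r})
    ⟨dist x y, x, hx, y, hy, hxy, rfl⟩ (pairFinite S)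
  exact this

lemma le_dMax {X : Finset α} {x y : α} (hx : x ∈ X) (hy : y ∈ X) (hxy : x ≠ y) :
    dist x y ≤ dMax X :=
  le_csSup (pairFinite X).bddAbove ⟨x, hx, y, hy, hxy, rfl⟩

lemma dMin_eq_divers (X : Finset α) : dMin X = divers X := rfl

lemma grid_exists {X : Finset α} {ε : ℝ} (hε0 : 0 < ε) (hε1 : ε < 1) {x : ℝ}
    (hpos : 0 < dMin X) (h1 : dMin X ≤ x) (h2 : x ≤ dMax X) :
    ∃ μ ∈ grid X ε, μ ≤ x ∧ (1 - ε) * x < μ := by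
  classical
  have h1e : 0 < 1 - ε := by linarith
  have hx0 : 0 < x := lt_of_lt_of_le hpos h1
  obtain ⟨N, hN⟩ := exists_pow_lt_of_lt_one (div_pos hpos hx0) (by linarith : 1 - ε < 1)
  set P : ℕ → Prop := fun j => dMin X / (1 - ε) ^ j ≤ x with hP
  have hP0 : P 0 := by simpa [hP] using h1
  have hPN : ¬ P N := by
    simp only [hP, not_le]
    rw [lt_div_iff₀ (pow_pos h1e N)]
    calc x * (1 - ε) ^ N < x * (dMin X / x) := mul_lt_mul_of_pos_left hN hx0
      _ = dMin X := by field_simp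
  set j := Nat.findGreatest P N with hj
  have hPj : P j := Nat.findGreatest_spec (Nat.zero_le N) hP0
  have hjN : j < N := lt_of_le_of_ne (Nat.findGreatest_le N) (fun h => hPN (h ▸ hPj))
  have hnot : ¬ P (j + 1) := Nat.findGreatest_is_greatest (Nat.lt_succ_self j) hjN
  refine ⟨dMin X / (1 - ε) ^ j, ⟨⟨j, rfl⟩, ?_, le_trans hPj h2⟩, hPj, ?_⟩
  · rw [le_div_iff₀ (pow_pos h1e j)]
    have : (1 - ε) ^ j ≤ 1 := pow_le_one₀ (by linarith) (by linarith)
    nlinarith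
  · have : x < dMin X / (1 - ε) ^ (j + 1) := not_le.mp hnot
    rw [pow_succ, ← div_div] at this
    rw [← lt_div_iff₀' h1e]
    exact this

end Aux

/-- Theorem 4: the `(1-ε)/(3m+2)` approximation guarantee of SFDM2 for fair max–min
diversity maximization with an arbitrary number `m` of groups. -/
theorem stmt_10 (X : Finset α) (m : ℕ) (hm : 1 ≤ m)
    (Xg : Fin m → Finset α) (kg : Fin m → ℕ) (ε : ℝ)
    (hcover : X = Finset.univ.biUnion Xg)
    (hdisj : ∀ i j, i ≠ j → Disjoint (Xg i) (Xg j))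
    (hne : ∀ i, (Xg i).Nonempty)
    (hkg : ∀ i, 1 ≤ kg i) (hsize : ∀ i, kg i ≤ (Xg i).card)
    (hk2 : 2 ≤ ∑ i, kg i)
    (hε0 : 0 < ε) (hε1 : ε < 1)
    (S₀ : ℝ → Finset α) (Sg : Fin m → ℝ → Finset α)
    (hS₀ : ∀ μ ∈ grid X ε, GreedyCandidate μ (∑ i, kg i) X (S₀ μ))
    (hSg : ∀ i, ∀ μ ∈ grid X ε, GreedyCandidate μ (∑ j, kg j) (Xg i) (Sg i μ)) :
    ∃ S : Finset α,
      (↑S : Set α) ⊆ (⋃ μ ∈ grid X ε,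
        ((S₀ μ ∪ Finset.univ.biUnion (fun i => Sg i μ) : Finset α) : Set α)) ∧
      (∀ i, (S ∩ Xg i).card = kg i) ∧
      (1 - ε) / (3 * (m : ℝ) + 2) * OPTf X Xg kg ≤ divers S := by
  classical
  have hXgX : ∀ i, Xg i ⊆ X := fun i => by
    rw [hcover]; exact subset_biUnion_of_mem Xg (mem_univ i)
  have hbin : ∀ (T : Fin m → Finset α), (∀ i, T i ⊆ Xg i) →
      ∀ i, (univ.biUnion T) ∩ Xg i = T i := by
    intro T hT i
    ext x
    simp only [mem_inter, mem_biUnion, mem_univ, true_and]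
    constructor
    · rintro ⟨⟨j, hj⟩, hxi⟩
      rcases eq_or_ne j i with rfl | hne'
      · exact hj
      · exact absurd hxi (Finset.disjoint_left.mp (hdisj j i hne') (hT j hj))
    · intro hx; exact ⟨⟨i, hx⟩, hT i hx⟩
  have hcardbi : ∀ (T : Fin m → Finset α), (∀ i, T i ⊆ Xg i) →
      (univ.biUnion T).card = ∑ i, (T i).card := by
    intro T hT
    refine card_biUnion ?_
    intro i _ j _ hij
    exact Disjoint.mono (hT i) (hT j) (hdisj i j hij)
  -- an optimal fair set O
  have hOmem : ∃ O, O ⊆ X ∧ (∀ i, (O ∩ Xg i).card = kg i) ∧ divers O = OPTf X Xg kg := by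
    choose T hTsub hTcard using fun i => exists_subset_card_eq (hsize i)
    have hTX : univ.biUnion T ⊆ X := by
      intro x hx
      obtain ⟨i, -, hi⟩ := mem_biUnion.mp hx
      exact hXgX i (hTsub i hi)
    have hfair : ∀ i, ((univ.biUnion T) ∩ Xg i).card = kg i := by
      intro i; rw [hbin T hTsub i]; exact hTcard i
    have hfin : {r : ℝ | ∃ S ⊆ X, (∀ i, (S ∩ Xg i).card = kg i) ∧ divers S = r}.Finite := by
      apply Set.Finite.subset (X.powerset.finite_toSet.image divers)
      rintro r ⟨S, hS, -, rfl⟩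
      exact ⟨S, by simpa [mem_powerset] using hS, rfl⟩
    have hmem := Set.Nonempty.csSup_mem
      (s := {r : ℝ | ∃ S ⊆ X, (∀ i, (S ∩ Xg i).card = kg i) ∧ divers S = r})
      ⟨divers (univ.biUnion T), univ.biUnion T, hTX, hfair, rfl⟩ hfin
    obtain ⟨O, h1, h2, h3⟩ := hmem
    exact ⟨O, h1, h2, h3⟩
  obtain ⟨O, hOX, hOfair, hOdiv⟩ := hOmem
  set β := OPTf X Xg kg with hβdef
  have hOcard : O.card = ∑ i, kg i := by
    have hOeq : O = univ.biUnion (fun i => O ∩ Xg i) := by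
      ext x
      simp only [mem_biUnion, mem_univ, true_and, mem_inter]
      constructor
      · intro hx
        have hxX := hOX hx
        rw [hcover] at hxX
        obtain ⟨i, -, hi⟩ := mem_biUnion.mp hxX
        exact ⟨i, hx, hi⟩
      · rintro ⟨i, hx, -⟩; exact hx
    rw [hOeq, hcardbi _ (fun i => inter_subset_right)]
    simp [hOfair]
  have hO2 : 1 < O.card := by omega
  have hβle : ∀ x ∈ O, ∀ y ∈ O, x ≠ y → β ≤ dist x y := fun x hx y hy hxy =>
    hOdiv ▸ divers_le_dist hx hy hxy
  have hX2 : 1 < X.card := lt_of_lt_of_le hO2 (card_le_card hOX)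
  have hdMinpos : 0 < dMin X := by
    obtain ⟨x, hx, y, hy, hxy, hd⟩ := divers_mem hX2
    rw [dMin_eq_divers, ← hd]
    exact dist_pos.mpr hxy
  have hdMinle : ∀ x ∈ X, ∀ y ∈ X, x ≠ y → dMin X ≤ dist x y := fun x hx y hy hxy =>
    divers_le_dist hx hy hxy
  have hdMM : dMin X ≤ dMax X := by
    obtain ⟨x, hx, y, hy, hxy, -⟩ := divers_mem hX2
    exact le_trans (hdMinle x hx y hy hxy) (le_dMax hx hy hxy)
  have hβdMin : dMin X ≤ β := by
    rw [← hOdiv]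
    exact le_divers hO2 (fun x hx y hy hxy => hdMinle x (hOX hx) y (hOX hy) hxy)
  have hβdMax : β ≤ dMax X := by
    obtain ⟨x, hx, y, hy, hxy, hd⟩ := divers_mem hO2
    rw [← hOdiv, ← hd]
    exact le_dMax (hOX hx) (hOX hy) hxy
  have hβpos : 0 < β := lt_of_lt_of_le hdMinpos hβdMin
  have hm1 : (1:ℝ) ≤ m := by exact_mod_cast hm
  have h3mpos : (0:ℝ) < 3 * (m:ℝ) + 2 := by linarith
  -- reduce to exhibiting a single grid value and per-group pieces
  suffices h : ∃ μ₀ ∈ grid X ε, ∃ T : Fin m → Finset α,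
      (∀ i, T i ⊆ Sg i μ₀) ∧ (∀ i, (T i).card = kg i) ∧
      (∀ x ∈ univ.biUnion T, ∀ y ∈ univ.biUnion T, x ≠ y →
        (1 - ε) / (3 * (m:ℝ) + 2) * β ≤ dist x y) by
    obtain ⟨μ₀, hμ₀, T, hTsub, hTcard, hTsep⟩ := h
    have hTXg : ∀ i, T i ⊆ Xg i := fun i => (hTsub i).trans (hSg i μ₀ hμ₀).1
    refine ⟨univ.biUnion T, ?_, ?_, ?_⟩
    · intro x hx
      obtain ⟨i, -, hi⟩ := mem_biUnion.mp (mem_coe.mp hx)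
      exact Set.mem_iUnion₂.mpr ⟨μ₀, hμ₀, mem_coe.mpr
        (mem_union_right _ (mem_biUnion.mpr ⟨i, mem_univ i, hTsub i hi⟩))⟩
    · intro i; rw [hbin T hTXg i]; exact hTcard i
    · have hcard : (univ.biUnion T).card = ∑ i, kg i := by
        rw [hcardbi T hTXg]
        exact Finset.sum_congr rfl (fun i _ => hTcard i)
      exact le_divers (by omega) hTsep
  by_cases hcase : dMin X ≤ 2 * β / 5
  · -- main case
    obtain ⟨μ, hμgrid, hμle, hμgt⟩ :=
      grid_exists hε0 hε1 hdMinpos hcase (by linarith : 2 * β / 5 ≤ dMax X)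
    have hμpos : 0 < μ := lt_of_lt_of_le hdMinpos hμgrid.2.1
    set τ := μ / 2 with hτdef
    have hτpos : 0 < τ := by positivity
    have hβ2μ : τ ≤ β - 2 * μ := by rw [hτdef]; linarith
    have htarget : (1 - ε) / (3 * (m:ℝ) + 2) * β ≤ τ := by
      have h5 : (1 - ε) / (3 * (m:ℝ) + 2) * β ≤ (1 - ε) * β / 5 := by
        rw [div_mul_eq_mul_div, div_le_div_iff₀ h3mpos (by norm_num)]
        nlinarith [mul_nonneg (by linarith : (0:ℝ) ≤ 1 - ε) hβpos.le]
      have h6 : (1 - ε) * β / 5 < τ := by rw [hτdef]; nlinarith [hμgt]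
      linarith
    have cand : ∀ i, GreedyCandidate μ (∑ j, kg j) (Xg i) (Sg i μ) := fun i => hSg i μ hμgrid
    have hSgXg : ∀ i, Sg i μ ⊆ Xg i := fun i => (cand i).1
    have hSgsep : ∀ i, Separated μ (Sg i μ) := fun i => (cand i).2.1
    set f : Fin m → α → α := fun i o =>
      if h : ∃ s ∈ Sg i μ, dist o s < μ then h.choose else o with hfdef
    have hf : ∀ i o, (∃ s ∈ Sg i μ, dist o s < μ) →
        f i o ∈ Sg i μ ∧ dist o (f i o) < μ := by
      intro i o h
      simp only [hfdef, dif_pos h]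
      exact ⟨h.choose_spec.1, h.choose_spec.2⟩
    set cov : Fin m → Finset α := fun i =>
      if (Sg i μ).card = ∑ j, kg j then ∅ else (O ∩ Xg i).image (f i) with hcovdef
    have hcovP : ∀ i, (Sg i μ).card ≠ ∑ j, kg j →
        ∀ o ∈ O ∩ Xg i, f i o ∈ Sg i μ ∧ dist o (f i o) < μ := by
      intro i hi o ho
      have hlt : (Sg i μ).card < ∑ j, kg j := lt_of_le_of_ne (cand i).2.2.1 hi
      exact hf i o ((cand i).2.2.2 hlt o (mem_inter.mp ho).2)
    have hcovsub : ∀ i, cov i ⊆ Sg i μ := by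
      intro i
      simp only [hcovdef]
      split_ifs with h
      · exact empty_subset _
      · intro x hx
        obtain ⟨o, ho, rfl⟩ := mem_image.mp hx
        exact (hcovP i h o ho).1
    have hcovcard : ∀ i, (Sg i μ).card ≠ ∑ j, kg j → (cov i).card = kg i := by
      intro i h
      simp only [hcovdef, if_neg h]
      rw [card_image_of_injOn, hOfair i]
      intro o ho o' ho' heq
      by_contra hne'
      have h1 := hcovP i h o (mem_coe.mp ho)
      have h2 := hcovP i h o' (mem_coe.mp ho')
      have hβ' := hβle o (mem_inter.mp (mem_coe.mp ho)).1 o' (mem_inter.mp (mem_coe.mp ho')).1 hne'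
      have htri := dist_triangle o (f i o) o'
      have hc : dist (f i o) o' = dist o' (f i o') := by rw [heq, dist_comm]
      linarith [h1.2, h2.2]
    have hcovle : ∀ i, (cov i).card ≤ kg i := by
      intro i
      by_cases h : (Sg i μ).card = ∑ j, kg j
      · simp [hcovdef, h]
      · exact (hcovcard i h).le
    have hcovsep : ∀ i j, (Sg i μ).card ≠ ∑ l, kg l → (Sg j μ).card ≠ ∑ l, kg l →
        ∀ o ∈ O ∩ Xg i, ∀ o' ∈ O ∩ Xg j, f i o ≠ f j o' → τ ≤ dist (f i o) (f j o') := by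
      intro i j hi hj o ho o' ho' hne'
      have h1 := hcovP i hi o ho
      have h2 := hcovP j hj o' ho'
      rcases eq_or_ne o o' with rfl | hoo
      · rcases eq_or_ne i j with rfl | hij
        · exact absurd rfl hne'
        · exact absurd (mem_inter.mp ho').2
            (Finset.disjoint_left.mp (hdisj i j hij) (mem_inter.mp ho).2)
      · have hβ' := hβle o (mem_inter.mp ho).1 o' (mem_inter.mp ho').1 hoo
        have htri := dist_triangle4 o (f i o) (f j o') o'
        have hc : dist (f j o') o' = dist o' (f j o') := dist_comm _ _
        linarith [h1.2, h2.2]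
    have hsepbase : ∀ x ∈ univ.biUnion cov, ∀ y ∈ univ.biUnion cov, x ≠ y → τ ≤ dist x y := by
      intro x hx y hy hxy
      obtain ⟨i, -, hxi⟩ := mem_biUnion.mp hx
      obtain ⟨j, -, hyj⟩ := mem_biUnion.mp hy
      by_cases hi : (Sg i μ).card = ∑ l, kg l
      · simp [hcovdef, hi] at hxi
      by_cases hj : (Sg j μ).card = ∑ l, kg l
      · simp [hcovdef, hj] at hyj
      simp only [hcovdef, if_neg hi] at hxi
      simp only [hcovdef, if_neg hj] at hyj
      obtain ⟨o, ho, rfl⟩ := mem_image.mp hxi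
      obtain ⟨o', ho', rfl⟩ := mem_image.mp hyj
      exact hcovsep i j hi hj o ho o' ho' hxy
    -- main induction: fill the full groups one by one
    have main : ∀ G : Finset (Fin m), (∀ i ∈ G, (Sg i μ).card = ∑ j, kg j) →
        ∃ T : Fin m → Finset α, (∀ i, T i ⊆ Sg i μ) ∧
          (∀ i ∈ G, (T i).card = kg i) ∧ (∀ i ∉ G, T i = cov i) ∧
          (∀ x ∈ univ.biUnion T, ∀ y ∈ univ.biUnion T, x ≠ y → τ ≤ dist x y) := by
      intro G
      induction G using Finset.induction_on with
      | empty =>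
        intro _
        exact ⟨cov, hcovsub, by simp, fun i _ => rfl, hsepbase⟩
      | @insert a G ha IH =>
        intro hfull
        obtain ⟨T, hT1, hT2, hT3, hT4⟩ := IH (fun i hi => hfull i (mem_insert_of_mem hi))
        have haF : (Sg a μ).card = ∑ j, kg j := hfull a (mem_insert_self a G)
        set C := univ.biUnion T with hCdef
        have hTXg : ∀ i, T i ⊆ Xg i := fun i => (hT1 i).trans (hSgXg i)
        have hTa : T a = ∅ := by rw [hT3 a ha]; simp [hcovdef, haF]
        have hTle : ∀ i, i ≠ a → (T i).card ≤ kg i := by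
          intro i hia
          by_cases hiG : i ∈ G
          · exact (hT2 i hiG).le
          · rw [hT3 i hiG]; exact hcovle i
        have hcardC : C.card + kg a ≤ ∑ j, kg j := by
          rw [hCdef, hcardbi T hTXg]
          have e1 : ∑ i, (T i).card = (T a).card + ∑ i ∈ univ.erase a, (T i).card :=
            (Finset.add_sum_erase _ _ (mem_univ a)).symm
          have e2 : ∑ j, kg j = kg a + ∑ i ∈ univ.erase a, kg i :=
            (Finset.add_sum_erase _ _ (mem_univ a)).symm
          have e3 : ∑ i ∈ univ.erase a, (T i).card ≤ ∑ i ∈ univ.erase a, kg i :=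
            Finset.sum_le_sum (fun i hi => hTle i (Finset.ne_of_mem_erase hi))
          have e4 : (T a).card = 0 := by rw [hTa]; rfl
          omega
        set U := (Sg a μ).filter (fun s => ∀ c ∈ C, τ ≤ dist s c) with hUdef
        have hUcard : kg a ≤ U.card := by
          have hblock : ∀ s ∈ Sg a μ \ U, ∃ c ∈ C, dist s c < τ := by
            intro s hs
            have h1 := (mem_sdiff.mp hs).1
            have h2 := (mem_sdiff.mp hs).2
            simp only [hUdef, mem_filter, not_and, not_forall, not_le] at h2
            obtain ⟨c, hc, hlt⟩ := h2 h1
            exact ⟨c, hc, hlt⟩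
          set g : α → α := fun s => if h : ∃ c ∈ C, dist s c < τ then h.choose else s with hgdef
          have hg : ∀ s ∈ Sg a μ \ U, g s ∈ C ∧ dist s (g s) < τ := by
            intro s hs
            have h := hblock s hs
            simp only [hgdef, dif_pos h]
            exact ⟨h.choose_spec.1, h.choose_spec.2⟩
          have hinj : Set.InjOn g ↑(Sg a μ \ U) := by
            intro s hs s' hs' heq
            by_contra hne'
            have h1 := hg s (mem_coe.mp hs)
            have h2 := hg s' (mem_coe.mp hs')
            have hsep := hSgsep a s (sdiff_subset (mem_coe.mp hs))
              s' (sdiff_subset (mem_coe.mp hs')) hne'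
            have htri := dist_triangle s (g s) s'
            have hc : dist (g s) s' = dist s' (g s') := by rw [heq, dist_comm]
            rw [hτdef] at h1 h2
            linarith [h1.2, h2.2]
          have hcard2 : (Sg a μ \ U).card ≤ C.card :=
            Finset.card_le_card_of_injOn g (fun s hs => (hg s hs).1) hinj
          have hsplit : (Sg a μ \ U).card + U.card = (Sg a μ).card :=
            Finset.card_sdiff_add_card_eq_card (filter_subset _ _)
          omega
        obtain ⟨Ta, hTaU, hTacard⟩ := exists_subset_card_eq hUcard
        have hTaSg : Ta ⊆ Sg a μ := hTaU.trans (filter_subset _ _)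
        have hbU : univ.biUnion (Function.update T a Ta) = C ∪ Ta := by
          ext x
          constructor
          · intro hx
            obtain ⟨i, -, hi⟩ := mem_biUnion.mp hx
            rcases eq_or_ne i a with rfl | hia
            · rw [Function.update_self] at hi
              exact mem_union_right _ hi
            · rw [Function.update_of_ne hia] at hi
              exact mem_union_left _ (mem_biUnion.mpr ⟨i, mem_univ i, hi⟩)
          · intro hx
            rcases mem_union.mp hx with hx | hx
            · obtain ⟨i, -, hi⟩ := mem_biUnion.mp hx
              rcases eq_or_ne i a with rfl | hia
              · rw [hTa] at hi; exact absurd hi (notMem_empty x)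
              · exact mem_biUnion.mpr ⟨i, mem_univ i, by
                  rw [Function.update_of_ne hia]; exact hi⟩
            · exact mem_biUnion.mpr ⟨a, mem_univ a, by
                rw [Function.update_self]; exact hx⟩
        refine ⟨Function.update T a Ta, ?_, ?_, ?_, ?_⟩
        · intro i
          rcases eq_or_ne i a with rfl | hia
          · rw [Function.update_self]; exact hTaSg
          · rw [Function.update_of_ne hia]; exact hT1 i
        · intro i hi
          rcases eq_or_ne i a with rfl | hia
          · rw [Function.update_self]; exact hTacard
          · rw [Function.update_of_ne hia]
            exact hT2 i ((mem_insert.mp hi).resolve_left hia)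
        · intro i hi
          have hia : i ≠ a := fun h => hi (h ▸ mem_insert_self a G)
          rw [Function.update_of_ne hia]
          exact hT3 i (fun h => hi (mem_insert_of_mem h))
        · rw [hbU]
          intro x hx y hy hxy
          rcases mem_union.mp hx with hxC | hxT
          · rcases mem_union.mp hy with hyC | hyT
            · exact hT4 x hxC y hyC hxy
            · have := (mem_filter.mp (hTaU hyT)).2 x hxC
              rw [dist_comm] at this
              exact this
          · rcases mem_union.mp hy with hyC | hyT
            · exact (mem_filter.mp (hTaU hxT)).2 y hyC
            · have := hSgsep a x (hTaSg hxT) y (hTaSg hyT) hxy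
              rw [hτdef]; linarith
    obtain ⟨T, hT1, hT2, hT3, hT4⟩ := main (univ.filter (fun i => (Sg i μ).card = ∑ j, kg j))
      (fun i hi => (mem_filter.mp hi).2)
    refine ⟨μ, hμgrid, T, hT1, ?_, ?_⟩
    · intro i
      by_cases hi : (Sg i μ).card = ∑ j, kg j
      · exact hT2 i (mem_filter.mpr ⟨mem_univ i, hi⟩)
      · rw [hT3 i (by simp [hi])]
        exact hcovcard i hi
    · intro x hx y hy hxy
      exact le_trans htarget (hT4 x hx y hy hxy)
  · -- easy case : every pair of `X` is far enough
    push_neg at hcase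
    have hgrid0 : dMin X ∈ grid X ε := ⟨⟨0, by simp⟩, le_refl _, hdMM⟩
    have hsup : ∀ i, kg i ≤ (Sg i (dMin X)).card := by
      intro i
      rcases eq_or_lt_of_le (hSg i _ hgrid0).2.2.1 with heq | hlt
      · rw [heq]
        exact single_le_sum (f := fun i => kg i) (fun _ _ => Nat.zero_le _) (mem_univ i)
      · have hcov := (hSg i _ hgrid0).2.2.2 hlt
        have hsub : Xg i ⊆ Sg i (dMin X) := by
          intro y hy
          obtain ⟨s, hs, hds⟩ := hcov y hy
          rcases eq_or_ne y s with rfl | hne'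
          · exact hs
          · exact absurd hds (not_lt.mpr
              (hdMinle y (hXgX i hy) s (hXgX i ((hSg i _ hgrid0).1 hs)) hne'))
        exact le_trans (hsize i) (card_le_card hsub)
    choose T hTsub hTcard using fun i => exists_subset_card_eq (hsup i)
    refine ⟨dMin X, hgrid0, T, hTsub, hTcard, ?_⟩
    intro x hx y hy hxy
    obtain ⟨i, -, hi⟩ := mem_biUnion.mp hx
    obtain ⟨j, -, hj⟩ := mem_biUnion.mp hy
    have hxX : x ∈ X := hXgX i ((hSg i _ hgrid0).1 (hTsub i hi))
    have hyX : y ∈ X := hXgX j ((hSg j _ hgrid0).1 (hTsub j hj))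
    have h1 : dMin X ≤ dist x y := hdMinle x hxX y hyX hxy
    have h2 : (1 - ε) / (3 * (m:ℝ) + 2) * β ≤ 2 * β / 5 := by
      rw [div_mul_eq_mul_div, div_le_div_iff₀ h3mpos (by norm_num)]
      nlinarith [mul_nonneg hε0.le hβpos.le, hβpos.le]
    linarith
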